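/- arXiv:2510.06190 — 2 statements merged into one kernel-verified Lean document; each statement's English description precedes it below -/
import Mathlib

section
/- For every x ∈ ℝ^n with n ≥ 1 and every index i in the argmax set A(x), the limit of softmax_τ(x)_i as τ → 0⁺ exists and equals 1 / |A(x)|. -/
open scoped Classical

/-- Softmax with temperature `τ`, coordinatewise:
`softmax τ x i = exp (x i / τ) / ∑ j, exp (x j / τ)`. -/
noncomputable def softmax {n : ℕ} (τ : ℝ) (x : Fin n → ℝ) (i : Fin n) : ℝ :=
  Real.exp (x i / τ) / ∑ j, Real.exp (x j / τ)

/-- The argmax set `A(x) = {j : x j = max_k x k}` of `x : Fin n → ℝ`. -/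
noncomputable def argmaxSet {n : ℕ} (x : Fin n → ℝ) : Finset (Fin n) :=
  Finset.univ.filter (fun j => ∀ k, x k ≤ x j)

lemma exp_div_tendsto_zero {c : ℝ} (hc : c < 0) :
    Filter.Tendsto (fun τ : ℝ => Real.exp (c / τ)) (nhdsWithin 0 (Set.Ioi 0)) (nhds 0) := by
  have h1 : Filter.Tendsto (fun τ : ℝ => c / τ) (nhdsWithin 0 (Set.Ioi 0)) Filter.atBot := by
    have := tendsto_inv_nhdsGT_zero.const_mul_atTop_of_neg hc
    simpa [div_eq_mul_inv] using this
  exact Real.tendsto_exp_atBot.comp h1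

/-- For every `x ∈ ℝ^n` with `n ≥ 1` and every index `i` in the argmax set `A(x)`,
the limit of `softmax_τ(x)_i` as `τ → 0⁺` exists and equals `1 / |A(x)|`. -/
theorem tendsto_softmax_of_mem_argmax
    {n : ℕ} (hn : 1 ≤ n) (x : Fin n → ℝ) (i : Fin n)
    (hi : i ∈ argmaxSet x) :
    Filter.Tendsto (fun τ => softmax τ x i) (nhdsWithin 0 (Set.Ioi 0))
      (nhds (1 / ((argmaxSet x).card : ℝ))) := by
  have hix : ∀ k, x k ≤ x i := by
    simpa [argmaxSet] using hi
  set A := argmaxSet x with hA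
  -- rewrite softmax as 1 / g τ
  have key : ∀ τ : ℝ, softmax τ x i = 1 / ∑ j, Real.exp ((x j - x i) / τ) := by
    intro τ
    have hsum : (∑ j, Real.exp (x j / τ))
        = Real.exp (x i / τ) * ∑ j, Real.exp ((x j - x i) / τ) := by
      rw [Finset.mul_sum]
      refine Finset.sum_congr rfl fun j _ => ?_
      rw [← Real.exp_add]
      congr 1
      ring
    rw [softmax, hsum, ← mul_one (Real.exp (x i / τ)), mul_assoc]
    rw [mul_div_mul_left _ _ (Real.exp_ne_zero _)]
    simp
  -- the sum splits
  have hsplit : ∀ τ : ℝ, (∑ j, Real.exp ((x j - x i) / τ))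
      = (A.card : ℝ) + ∑ j ∈ Aᶜ, Real.exp ((x j - x i) / τ) := by
    intro τ
    rw [← Finset.sum_add_sum_compl A]
    congr 1
    calc ∑ j ∈ A, Real.exp ((x j - x i) / τ) = ∑ _j ∈ A, (1:ℝ) := by
          refine Finset.sum_congr rfl fun j hj => ?_
          have hjx : ∀ k, x k ≤ x j := by simpa [hA, argmaxSet] using hj
          have hxx : x j = x i := le_antisymm (hix j) (hjx i)
          simp [hxx]
      _ = (A.card : ℝ) := by simp
  have htail : Filter.Tendsto (fun τ : ℝ => ∑ j ∈ Aᶜ, Real.exp ((x j - x i) / τ))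
      (nhdsWithin 0 (Set.Ioi 0)) (nhds 0) := by
    have : Filter.Tendsto (fun τ : ℝ => ∑ j ∈ Aᶜ, Real.exp ((x j - x i) / τ))
        (nhdsWithin 0 (Set.Ioi 0)) (nhds (∑ j ∈ Aᶜ, (0 : ℝ))) := by
      refine tendsto_finset_sum _ fun j hj => ?_
      have hj' : ¬ (∀ k, x k ≤ x j) := by
        simp only [Finset.mem_compl, hA, argmaxSet, Finset.mem_filter, Finset.mem_univ,
          true_and] at hj
        exact hj
      push_neg at hj'
      obtain ⟨k, hk⟩ := hj'
      exact exp_div_tendsto_zero (by linarith [hix k])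
    simpa using this
  have hg : Filter.Tendsto (fun τ : ℝ => ∑ j, Real.exp ((x j - x i) / τ))
      (nhdsWithin 0 (Set.Ioi 0)) (nhds (A.card : ℝ)) := by
    have := (tendsto_const_nhds (x := (A.card : ℝ))
      (f := nhdsWithin (0:ℝ) (Set.Ioi 0))).add htail
    simp only [add_zero] at this
    exact this.congr fun τ => (hsplit τ).symm
  have hcard : (A.card : ℝ) ≠ 0 := by
    have : 0 < A.card := Finset.card_pos.mpr ⟨i, hi⟩
    exact_mod_cast this.ne'
  have := (tendsto_const_nhds (x := (1:ℝ))
    (f := nhdsWithin (0:ℝ) (Set.Ioi 0))).div hg hcard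
  exact this.congr fun τ => (key τ).symm
end

section
/- For all natural numbers a, b and every index i, the carry into bit i is 1 (i.e., a % 2^i + b % 2^i ≥ 2^i) if and only if there exists j < i such that g_j = true (Nat.testBit a j = true and Nat.testBit b j = true) and p_t = true (Nat.testBit a t ≠ Nat.testBit b t) for every t with j < t < i; this is the carry-lookahead closed form for the carries of binary addition. -/
def carry (a b i : ℕ) : Bool := decide (2 ^ i ≤ a % 2 ^ i + b % 2 ^ i)

lemma carry_succ_iff (a b i : ℕ) : carry a b (i+1) = true ↔
    ((a.testBit i = true ∧ b.testBit i = true) ∨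
      (a.testBit i ≠ b.testBit i ∧ carry a b i = true)) := by
  simp only [carry, Nat.testBit_eq_decide_div_mod_eq, pow_succ, Nat.mod_mul, decide_eq_true_eq]
  have ha : a % 2 ^ i < 2 ^ i := Nat.mod_lt _ (by positivity)
  have hb : b % 2 ^ i < 2 ^ i := Nat.mod_lt _ (by positivity)
  rcases Nat.mod_two_eq_zero_or_one (a / 2 ^ i) with h1 | h1 <;>
    rcases Nat.mod_two_eq_zero_or_one (b / 2 ^ i) with h2 | h2 <;>
      rw [h1, h2] <;> simp <;> omega

/-- Carry-lookahead closed form for the carries of binary addition: the carry into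
bit `i` is `1` iff there exists `j < i` with generate bit `g_j = true`
(`a.testBit j = true` and `b.testBit j = true`) and propagate bit `p_t = true`
(`a.testBit t ≠ b.testBit t`) for every `t` with `j < t < i`. -/
theorem carry_lookahead (a b i : ℕ) :
    carry a b i = true ↔
      ∃ j < i, (Nat.testBit a j = true ∧ Nat.testBit b j = true) ∧
        ∀ t, j < t → t < i → Nat.testBit a t ≠ Nat.testBit b t := by
  induction i with
  | zero => simp [carry, Nat.mod_one]
  | succ i ih =>
    rw [carry_succ_iff, ih]
    constructor
    · rintro (⟨h1, h2⟩ | ⟨hp, j, hj, hg, hprop⟩)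
      · exact ⟨i, lt_add_one i, ⟨h1, h2⟩, fun t ht1 ht2 => absurd ht2 (by omega)⟩
      · refine ⟨j, by omega, hg, fun t ht1 ht2 => ?_⟩
        rcases Nat.lt_succ_iff_lt_or_eq.mp ht2 with h | h
        · exact hprop t ht1 h
        · subst h; exact hp
    · rintro ⟨j, hj, hg, hprop⟩
      rcases Nat.lt_succ_iff_lt_or_eq.mp hj with h | h
      · exact Or.inr ⟨hprop i h (lt_add_one i), j, h, hg, fun t ht1 ht2 => hprop t ht1 (by omega)⟩
      · subst h; exact Or.inl hg
end
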